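/- arXiv:1810.06982 — 6 statements merged into one kernel-verified Lean document; each statement's English description precedes it below -/
import Mathlib

section
/- Let c₁, c₂ ∈ ℂ and z₀ ∈ ℂ. The alternated orbit (zₙ) of z₀ (with z_{n+1} = zₙ² + c₁ for n even and z_{n+1} = zₙ² + c₂ for n odd) is a bounded sequence in ℂ if and only if the orbit (Q^{∘n}(z₀)) of z₀ under the quartic polynomial Q(w) = (w² + c₁)² + c₂ is bounded. -/
/-- The alternated orbit of `z₀` with parameters `c₁, c₂`:
`z_{n+1} = zₙ² + c₁` if `n` is even, `z_{n+1} = zₙ² + c₂` if `n` is odd. -/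
def altOrbit (c₁ c₂ z₀ : ℂ) : ℕ → ℂ
  | 0 => z₀
  | n + 1 => if Even n then (altOrbit c₁ c₂ z₀ n) ^ 2 + c₁
             else (altOrbit c₁ c₂ z₀ n) ^ 2 + c₂

/-- The alternated filled Julia set `K_{P_{c₁ c₂}}`. -/
def altK (c₁ c₂ : ℂ) : Set ℂ :=
  {z₀ | Bornology.IsBounded (Set.range (altOrbit c₁ c₂ z₀))}

theorem stmt_2 (c₁ c₂ z₀ : ℂ) :
    Bornology.IsBounded (Set.range (altOrbit c₁ c₂ z₀)) ↔
      Bornology.IsBounded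
        (Set.range fun n : ℕ => (fun w : ℂ => (w ^ 2 + c₁) ^ 2 + c₂)^[n] z₀) := by
  have heven : ∀ n : ℕ, altOrbit c₁ c₂ z₀ (2 * n) =
      (fun w : ℂ => (w ^ 2 + c₁) ^ 2 + c₂)^[n] z₀ := by
    intro n
    induction n with
    | zero => rfl
    | succ n ih =>
      have h1 : 2 * (n + 1) = (2 * n + 1) + 1 := by ring
      rw [h1]
      have he : altOrbit c₁ c₂ z₀ (2 * n + 1) = altOrbit c₁ c₂ z₀ (2 * n) ^ 2 + c₁ := by
        simp [altOrbit]
      have ho : altOrbit c₁ c₂ z₀ ((2 * n + 1) + 1) =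
          altOrbit c₁ c₂ z₀ (2 * n + 1) ^ 2 + c₂ := by
        simp [altOrbit, Nat.even_add_one, parity_simps]
      rw [ho, he, ih, Function.iterate_succ_apply']
  constructor
  · intro h
    refine h.subset ?_
    rintro x ⟨n, rfl⟩
    exact ⟨2 * n, heven n⟩
  · intro h
    rw [isBounded_iff_forall_norm_le] at h ⊢
    obtain ⟨r, hr⟩ := h
    refine ⟨max r (r ^ 2 + ‖c₁‖), ?_⟩
    rintro x ⟨n, rfl⟩
    have hr0 : 0 ≤ r := le_trans (norm_nonneg _) (hr _ ⟨0, rfl⟩)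
    rcases Nat.even_or_odd n with ⟨k, hk⟩ | ⟨k, hk⟩
    · have : altOrbit c₁ c₂ z₀ n = (fun w : ℂ => (w ^ 2 + c₁) ^ 2 + c₂)^[k] z₀ := by
        rw [hk, ← two_mul, heven]
      rw [this]
      exact le_max_of_le_left (hr _ ⟨k, rfl⟩)
    · have : altOrbit c₁ c₂ z₀ n =
          ((fun w : ℂ => (w ^ 2 + c₁) ^ 2 + c₂)^[k] z₀) ^ 2 + c₁ := by
        rw [hk, ← heven k]
        simp [altOrbit]
      rw [this]
      refine le_max_of_le_right ?_
      calc ‖((fun w : ℂ => (w ^ 2 + c₁) ^ 2 + c₂)^[k] z₀) ^ 2 + c₁‖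
          ≤ ‖((fun w : ℂ => (w ^ 2 + c₁) ^ 2 + c₂)^[k] z₀) ^ 2‖ + ‖c₁‖ := norm_add_le _ _
        _ ≤ r ^ 2 + ‖c₁‖ := by
            rw [norm_pow]
            gcongr
            exact hr _ ⟨k, rfl⟩
end

section
/- Let c₁, c₂ ∈ ℂ and set R = max(2, |c₁|, |c₂|). If (zₙ) is the alternated orbit of z₀ (z_{n+1} = zₙ² + c₁ for n even, z_{n+1} = zₙ² + c₂ for n odd) and there exists N ∈ ℕ with |z_N| > R, then |zₙ| → ∞ as n → ∞; in particular the alternated orbit is unbounded. -/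
open Filter Set

lemma altOrbit_succ (c₁ c₂ z₀ : ℂ) (n : ℕ) :
    altOrbit c₁ c₂ z₀ (n + 1) = altOrbit c₁ c₂ z₀ n ^ 2 + if Even n then c₁ else c₂ := by
  by_cases h : Even n <;> simp [altOrbit, h]

lemma sub_one_mul_norm_le_norm_sq_add {𝕜 : Type*} [NormedDivisionRing 𝕜] {w c : 𝕜} {a : ℝ}
    (ha : a ≤ ‖w‖) (hc : ‖c‖ ≤ ‖w‖) : (a - 1) * ‖w‖ ≤ ‖w ^ 2 + c‖ :=
  calc (a - 1) * ‖w‖ ≤ (‖w‖ - 1) * ‖w‖ := by gcongr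
    _ ≤ ‖w ^ 2‖ - ‖c‖ := by rw [norm_pow]; linarith
    _ ≤ ‖w ^ 2 + c‖ := norm_sub_le_norm_add _ _

lemma mul_pow_le_of_escape {u : ℕ → ℝ} {a q : ℝ} {N : ℕ} (ha : 0 ≤ a) (hq : 1 ≤ q)
    (hN : a ≤ u N) (hstep : ∀ n, a ≤ u n → q * u n ≤ u (n + 1)) (k : ℕ) :
    a * q ^ k ≤ u (N + k) := by
  induction k with
  | zero => simpa using hN
  | succ k ih =>
    have hak : a ≤ u (N + k) := le_trans (le_mul_of_one_le_right ha (one_le_pow₀ hq)) ih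
    calc a * q ^ (k + 1) = q * (a * q ^ k) := by ring
      _ ≤ q * u (N + k) := by gcongr
      _ ≤ u (N + k + 1) := hstep _ hak

lemma tendsto_atTop_of_escape {u : ℕ → ℝ} {a q : ℝ} {N : ℕ} (ha : 0 < a) (hq : 1 < q)
    (hN : a ≤ u N) (hstep : ∀ n, a ≤ u n → q * u n ≤ u (n + 1)) :
    Tendsto u atTop atTop := by
  rw [← tendsto_add_atTop_iff_nat N]
  refine tendsto_atTop_mono (fun k => ?_)
    ((tendsto_pow_atTop_atTop_of_one_lt hq).const_mul_atTop ha)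
  rw [add_comm]
  exact mul_pow_le_of_escape ha.le hq.le hN hstep k

lemma not_isBounded_range_of_tendsto_norm {E : Type*} [SeminormedAddGroup E] {u : ℕ → E}
    (h : Tendsto (fun n => ‖u n‖) atTop atTop) : ¬ Bornology.IsBounded (range u) := by
  intro hb
  obtain ⟨C, hC⟩ := isBounded_iff_forall_norm_le.mp hb
  exact not_bddAbove_of_tendsto_atTop h ⟨C, forall_mem_range.2 fun n => hC _ (mem_range_self n)⟩

theorem stmt_8 (c₁ c₂ z₀ : ℂ)
    (R : ℝ) (hR : R = max 2 (max (‖c₁‖) (‖c₂‖)))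
    (N : ℕ) (hN : R < ‖altOrbit c₁ c₂ z₀ N‖) :
    Filter.Tendsto (fun n : ℕ => ‖altOrbit c₁ c₂ z₀ n‖)
      Filter.atTop Filter.atTop ∧
    ¬ Bornology.IsBounded (Set.range (altOrbit c₁ c₂ z₀)) := by
  set a := ‖altOrbit c₁ c₂ z₀ N‖
  have h2a : 2 < a := (hR ▸ le_max_left _ _).trans_lt hN
  have hca : ∀ n : ℕ, ‖(if Even n then c₁ else c₂)‖ < a := fun n => by
    split_ifs <;> exact lt_of_le_of_lt (by simp [hR]) hN
  have htend : Tendsto (fun n => ‖altOrbit c₁ c₂ z₀ n‖) atTop atTop :=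
    tendsto_atTop_of_escape (by linarith) (by linarith : 1 < a - 1) le_rfl fun n hn => by
      rw [altOrbit_succ]
      exact sub_one_mul_norm_le_norm_sq_add hn ((hca n).le.trans hn)
  exact ⟨htend, not_isBounded_range_of_tendsto_norm htend⟩
end

section
/- Let c₁, c₂ ∈ ℂ. The alternated filled Julia set K_{P_{c₁c₂}} is contained in the closed disk of radius max(2, |c₁|, |c₂|) centered at the origin; in particular K_{P_{c₁c₂}} is a bounded subset of ℂ. -/
/-!
Outside the disk of radius `R = max 2 (max ‖c₁‖ ‖c₂‖)` both maps `w ↦ w² + cᵢ` expand: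
`‖c‖ ≤ ‖w‖` gives `‖w² + c‖ ≥ ‖w‖ (‖w‖ - 1)`. Hence an orbit starting at `‖z₀‖ = r > R` satisfies
`‖zₙ‖ ≥ (r - 1)ⁿ r` with `r - 1 > 1`, and is unbounded.
-/

lemma norm_mul_norm_sub_one_le_norm_sq_add {𝕜 : Type*} [NormedDivisionRing 𝕜] {w c : 𝕜}
    (h : ‖c‖ ≤ ‖w‖) : ‖w‖ * (‖w‖ - 1) ≤ ‖w ^ 2 + c‖ := by
  have hsq := norm_sub_le (w ^ 2 + c) c
  rw [add_sub_cancel_right, norm_pow] at hsq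
  nlinarith

lemma norm_mul_norm_sub_one_le_norm_altOrbit_succ {c₁ c₂ z₀ : ℂ} (n : ℕ)
    (h₁ : ‖c₁‖ ≤ ‖altOrbit c₁ c₂ z₀ n‖) (h₂ : ‖c₂‖ ≤ ‖altOrbit c₁ c₂ z₀ n‖) :
    ‖altOrbit c₁ c₂ z₀ n‖ * (‖altOrbit c₁ c₂ z₀ n‖ - 1) ≤ ‖altOrbit c₁ c₂ z₀ (n + 1)‖ := by
  rw [altOrbit]
  split_ifs
  · exact norm_mul_norm_sub_one_le_norm_sq_add h₁
  · exact norm_mul_norm_sub_one_le_norm_sq_add h₂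

lemma pow_mul_le_norm_altOrbit {c₁ c₂ z₀ : ℂ} (h : max 2 (max ‖c₁‖ ‖c₂‖) < ‖z₀‖) (n : ℕ) :
    (‖z₀‖ - 1) ^ n * ‖z₀‖ ≤ ‖altOrbit c₁ c₂ z₀ n‖ := by
  obtain ⟨h2, hc₁, hc₂⟩ : 2 < ‖z₀‖ ∧ ‖c₁‖ < ‖z₀‖ ∧ ‖c₂‖ < ‖z₀‖ := by
    simpa only [max_lt_iff] using h
  induction n with
  | zero => simp [altOrbit]
  | succ n ih =>
    set z := ‖altOrbit c₁ c₂ z₀ n‖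
    have hpow : 1 ≤ (‖z₀‖ - 1) ^ n := one_le_pow₀ (by linarith)
    have hz : ‖z₀‖ ≤ z := le_trans (le_mul_of_one_le_left (by linarith) hpow) ih
    have hstep := norm_mul_norm_sub_one_le_norm_altOrbit_succ n (hc₁.le.trans hz) (hc₂.le.trans hz)
    calc (‖z₀‖ - 1) ^ (n + 1) * ‖z₀‖ = (‖z₀‖ - 1) ^ n * ‖z₀‖ * (‖z₀‖ - 1) := by ring
      _ ≤ z * (z - 1) := by gcongr; linarith
      _ ≤ _ := hstep

lemma not_isBounded_range_altOrbit {c₁ c₂ z₀ : ℂ} (h : max 2 (max ‖c₁‖ ‖c₂‖) < ‖z₀‖) :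
    ¬ Bornology.IsBounded (Set.range (altOrbit c₁ c₂ z₀)) := by
  rintro hbdd
  obtain ⟨C, hC⟩ := isBounded_iff_forall_norm_le.mp hbdd
  have h1 : 1 < ‖z₀‖ - 1 := by linarith [(le_max_left _ _).trans_lt h]
  obtain ⟨n, hn⟩ := pow_unbounded_of_one_lt C h1
  have hpow : 1 ≤ (‖z₀‖ - 1) ^ n := one_le_pow₀ h1.le
  have := calc
    C < (‖z₀‖ - 1) ^ n := hn
    _ ≤ (‖z₀‖ - 1) ^ n * ‖z₀‖ := le_mul_of_one_le_right (by linarith) (by linarith)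
    _ ≤ ‖altOrbit c₁ c₂ z₀ n‖ := pow_mul_le_norm_altOrbit h n
    _ ≤ C := hC _ (Set.mem_range_self n)
  exact this.false

lemma altK_subset_closedBall (c₁ c₂ : ℂ) :
    altK c₁ c₂ ⊆ Metric.closedBall 0 (max 2 (max ‖c₁‖ ‖c₂‖)) := by
  intro z₀ hz₀
  rw [mem_closedBall_zero_iff]
  by_contra! h
  exact not_isBounded_range_altOrbit h hz₀

theorem stmt_9 (c₁ c₂ : ℂ) :
    altK c₁ c₂ ⊆ Metric.closedBall 0 (max 2 (max ‖c₁‖ ‖c₂‖)) ∧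
    Bornology.IsBounded (altK c₁ c₂) :=
  ⟨altK_subset_closedBall c₁ c₂, Metric.isBounded_closedBall.subset (altK_subset_closedBall c₁ c₂)⟩
end

section
/- Let c₁, c₂ ∈ ℂ and Q(w) = (w² + c₁)² + c₂. If for every critical point w of Q (i.e. every w with Q′(w) = 0) the orbit (Q^{∘n}(w)) is bounded, then the alternated filled Julia set K_{P_{c₁c₂}} is a connected subset of ℂ. -/
/-!
Let `Q = f₂ ∘ f₁` with `fᵢ z = z² + cᵢ`. The even terms of an alternated orbit form a `Q`-orbit
and the odd ones are their images under `f₁`, so `K_{P_{c₁c₂}}` is the filled Julia set of `Q`.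
Outside the disc of radius `R = 2 + ‖c₁‖ + ‖c₂‖` the norm grows by at least one under `Q`, hence
this filled Julia set is the decreasing intersection of the compact sets
`Sₙ = (Q^[n])⁻¹ (closedBall 0 R)`.
Since `z ↦ z² + c` is a proper map that is invariant under `z ↦ -z` and whose only critical value
is `c`, it pulls back a preconnected set containing `c` to a preconnected set. The critical values
`c₂` and `Q 0` of `Q` have bounded orbits, so they lie in every `Sₙ`, and by induction every `Sₙ`
is a continuum; a nested intersection of continua is connected.
-/

open Bornology Metric Set

theorem isPreconnected_iInter_of_directed {X ι : Type*} [TopologicalSpace X] [T2Space X]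
    [Nonempty ι] {K : ι → Set X} (hdir : Directed (· ⊇ ·) K) (hcomp : ∀ i, IsCompact (K i))
    (hconn : ∀ i, IsPreconnected (K i)) : IsPreconnected (⋂ i, K i) := by
  set L := ⋂ i, K i
  have hL : IsCompact L := (hcomp (Classical.arbitrary ι)).of_isClosed_subset
    (isClosed_iInter fun i => (hcomp i).isClosed) (iInter_subset _ _)
  rw [isPreconnected_closed_iff]
  intro A B hA hB hLAB ⟨a, haL, haA⟩ ⟨b, hbL, hbB⟩
  by_contra hempty
  have hdisj : Disjoint (L ∩ A) (L ∩ B) :=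
    disjoint_left.2 fun x ⟨hxL, hxA⟩ ⟨_, hxB⟩ => hempty ⟨x, hxL, hxA, hxB⟩
  obtain ⟨U, V, hU, hV, hAU, hBV, hUV⟩ :=
    SeparatedNhds.of_isCompact_isCompact (hL.inter_right hA) (hL.inter_right hB) hdisj
  obtain ⟨i, hi⟩ : ∃ i, K i ⊆ U ∪ V := by
    refine exists_subset_nhds_of_isCompact hdir hcomp fun x hx => (hU.union hV).mem_nhds ?_
    rcases hLAB hx with hxA | hxB
    exacts [Or.inl (hAU ⟨hx, hxA⟩), Or.inr (hBV ⟨hx, hxB⟩)]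
  obtain ⟨x, -, hxU, hxV⟩ := hconn i U V hU hV hi
    ⟨a, mem_iInter.1 haL i, hAU ⟨haL, haA⟩⟩ ⟨b, mem_iInter.1 hbL i, hBV ⟨hbL, hbB⟩⟩
  exact hUV.le_bot ⟨hxU, hxV⟩

section NormGrowth

variable {E : Type*} [SeminormedAddCommGroup E]

def NormGrowsBeyond (f : E → E) (R : ℝ) : Prop := ∀ w, R < ‖w‖ → ‖w‖ + 1 ≤ ‖f w‖

variable {f g : E → E} {R : ℝ}

lemma NormGrowsBeyond.comp (hg : NormGrowsBeyond g R) (hf : NormGrowsBeyond f R) :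
    NormGrowsBeyond (g ∘ f) R := fun w hw => by
  have hfw := hf w hw
  have hgfw := hg (f w) (by linarith)
  rw [Function.comp_apply]
  linarith

lemma NormGrowsBeyond.norm_add_le_norm_iterate (hf : NormGrowsBeyond f R) {z : E}
    (hz : R < ‖z‖) (k : ℕ) : ‖z‖ + k ≤ ‖f^[k] z‖ := by
  induction k with
  | zero => simp
  | succ k ih =>
    rw [Function.iterate_succ_apply']
    have := hf _ (by linarith [(Nat.cast_nonneg k : (0 : ℝ) ≤ k)])
    push_cast
    linarith

lemma NormGrowsBeyond.not_isBounded_range_iterate (hf : NormGrowsBeyond f R) {z : E}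
    (hz : R < ‖z‖) : ¬ IsBounded (range fun k => f^[k] z) := by
  rintro hb
  obtain ⟨C, hC⟩ := isBounded_iff_forall_norm_le.1 hb
  obtain ⟨k, hk⟩ := exists_nat_gt C
  have := hC _ (mem_range_self k)
  linarith [hf.norm_add_le_norm_iterate hz k, norm_nonneg z]

lemma NormGrowsBeyond.isBounded_range_iterate_iff (hf : NormGrowsBeyond f R) {z : E} :
    IsBounded (range fun n => f^[n] z) ↔ ∀ n, ‖f^[n] z‖ ≤ R := by
  refine ⟨fun hb n => ?_, fun h => isBounded_iff_forall_norm_le.2 ⟨R, forall_mem_range.2 h⟩⟩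
  by_contra! hn
  refine hf.not_isBounded_range_iterate hn (hb.subset ?_)
  exact range_subset_iff.2 fun k => ⟨k + n, Function.iterate_add_apply f k n z⟩

lemma NormGrowsBeyond.antitone_preimage_iterate_closedBall (hf : NormGrowsBeyond f R) :
    Antitone fun n => f^[n] ⁻¹' closedBall 0 R := by
  refine antitone_nat_of_succ_le fun n z hz => ?_
  simp only [mem_preimage, mem_closedBall_zero_iff, Function.iterate_succ_apply'] at hz ⊢
  by_contra! hn
  linarith [hf _ hn]

end NormGrowth

lemma normGrowsBeyond_sq_add {c : ℂ} {R : ℝ} (hR : 2 + ‖c‖ ≤ R) :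
    NormGrowsBeyond (fun w : ℂ => w ^ 2 + c) R := fun w hw => by
  have h := norm_sub_norm_le (w ^ 2) (-c)
  rw [sub_neg_eq_add, norm_neg, norm_pow] at h
  nlinarith [norm_nonneg c]

lemma isProperMap_sq_add (c : ℂ) : IsProperMap fun z : ℂ => z ^ 2 + c := by
  have hdeg : 0 < (Polynomial.X ^ 2 + Polynomial.C c).degree := by
    rw [Polynomial.degree_X_pow_add_C two_pos]
    norm_num
  convert (Polynomial.X ^ 2 + Polynomial.C c).isProperMap_eval hdeg using 2
  simp

/-- Splitting the preimage along a closed cover `A ∪ B` with `0 ∈ A`, the images of the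
`neg`-invariant part `A ∩ -A` and of `B ∪ -B` are closed and cover `T`, so they meet. -/
theorem IsPreconnected.preimage_sq_add {c : ℂ} {T : Set ℂ} (hT : IsPreconnected T) (hc : c ∈ T) :
    IsPreconnected ((fun z : ℂ => z ^ 2 + c) ⁻¹' T) := by
  set g : ℂ → ℂ := fun z => z ^ 2 + c
  have hg_neg : ∀ z, g (-z) = g z := fun z => by simp [g]
  suffices key : ∀ A B : Set ℂ, IsClosed A → IsClosed B → g ⁻¹' T ⊆ A ∪ B → (0 : ℂ) ∈ A →
      (g ⁻¹' T ∩ B).Nonempty → (g ⁻¹' T ∩ (A ∩ B)).Nonempty by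
    rw [isPreconnected_closed_iff]
    intro A B hA hB hcover hA_ne hB_ne
    have h0 : (0 : ℂ) ∈ g ⁻¹' T := by simpa [g] using hc
    rcases hcover h0 with h0A | h0B
    · exact key A B hA hB hcover h0A hB_ne
    · rw [inter_comm A]
      exact key B A hB hA (union_comm A B ▸ hcover) h0B hA_ne
  intro A B hA hB hcover h0A ⟨b, hbT, hbB⟩
  have hg_closed : IsClosedMap g := (isProperMap_sq_add c).isClosedMap
  have hTcover : T ⊆ g '' (A ∩ Neg.neg ⁻¹' A) ∪ g '' (B ∪ Neg.neg ⁻¹' B) := by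
    intro t ht
    obtain ⟨z, hz⟩ := IsAlgClosed.exists_pow_nat_eq (t - c) two_pos
    have hgz : g z = t := by simp [g, hz]
    have hzT : z ∈ g ⁻¹' T := by simpa [hgz]
    have hnzT : -z ∈ g ⁻¹' T := by simpa [mem_preimage, hg_neg]
    by_cases hzB : z ∈ B ∪ Neg.neg ⁻¹' B
    · exact Or.inr ⟨z, hzB, hgz⟩
    · simp only [mem_union, mem_preimage, not_or] at hzB
      exact Or.inl ⟨z, ⟨(hcover hzT).resolve_right hzB.1, (hcover hnzT).resolve_right hzB.2⟩, hgz⟩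
  obtain ⟨_, hgaT, ⟨a, ⟨haA, hnaA⟩, rfl⟩, ⟨b', hb'B, hgb'⟩⟩ := isPreconnected_closed_iff.1 hT _ _
    (hg_closed _ (hA.inter (hA.preimage continuous_neg)))
    (hg_closed _ (hB.union (hB.preimage continuous_neg))) hTcover
    ⟨c, hc, 0, ⟨h0A, by simpa using h0A⟩, by simp [g]⟩ ⟨g b, hbT, b, Or.inl hbB, rfl⟩
  have hab : b' = a ∨ b' = -a := sq_eq_sq_iff_eq_or_eq_neg.1 (add_right_cancel hgb')
  rcases hb'B with hb'B | hb'B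
  · refine ⟨b', by rwa [mem_preimage, hgb'], ?_, hb'B⟩
    rcases hab with rfl | rfl
    exacts [haA, hnaA]
  · refine ⟨-b', by rwa [mem_preimage, hg_neg, hgb'], ?_, hb'B⟩
    rcases hab with rfl | rfl
    exacts [hnaA, by simpa using haA]

def quartic (c₁ c₂ : ℂ) : ℂ → ℂ := fun w => (w ^ 2 + c₁) ^ 2 + c₂

section Quartic

variable (c₁ c₂ : ℂ)

lemma normGrowsBeyond_quartic : NormGrowsBeyond (quartic c₁ c₂) (2 + ‖c₁‖ + ‖c₂‖) :=
  (normGrowsBeyond_sq_add (by linarith [norm_nonneg c₁])).comp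
    (normGrowsBeyond_sq_add (by linarith [norm_nonneg c₂]))

lemma deriv_quartic (w : ℂ) : deriv (quartic c₁ c₂) w = 4 * w * (w ^ 2 + c₁) := by
  have h : HasDerivAt (fun w : ℂ => w ^ 2 + c₁) (2 * w) w := by
    simpa using (hasDerivAt_pow 2 w).add_const c₁
  have hQ : HasDerivAt (quartic c₁ c₂) (↑2 * (w ^ 2 + c₁) ^ (2 - 1) * (2 * w)) w :=
    (h.pow 2).add_const c₂
  rw [hQ.deriv]
  ring

lemma isCompact_and_isPreconnected_preimage_quartic {T : Set ℂ} (hTc : IsCompact T)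
    (hT : IsPreconnected T) (hc₂ : c₂ ∈ T) (hc₁ : c₁ ^ 2 + c₂ ∈ T) :
    IsCompact (quartic c₁ c₂ ⁻¹' T) ∧ IsPreconnected (quartic c₁ c₂ ⁻¹' T) :=
  ⟨(isProperMap_sq_add c₁).isCompact_preimage ((isProperMap_sq_add c₂).isCompact_preimage hTc),
    (hT.preimage_sq_add hc₂).preimage_sq_add hc₁⟩

lemma isCompact_and_isPreconnected_preimage_iterate_quartic {R : ℝ}
    (hc₂ : ∀ n, c₂ ∈ (quartic c₁ c₂)^[n] ⁻¹' closedBall 0 R)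
    (hc₁ : ∀ n, c₁ ^ 2 + c₂ ∈ (quartic c₁ c₂)^[n] ⁻¹' closedBall 0 R) (n : ℕ) :
    IsCompact ((quartic c₁ c₂)^[n] ⁻¹' closedBall 0 R) ∧
      IsPreconnected ((quartic c₁ c₂)^[n] ⁻¹' closedBall 0 R) := by
  induction n with
  | zero => exact ⟨isCompact_closedBall 0 R, (convex_closedBall 0 R).isPreconnected⟩
  | succ n ih =>
    rw [Function.iterate_succ, preimage_comp]
    exact isCompact_and_isPreconnected_preimage_quartic c₁ c₂ ih.1 ih.2 (hc₂ n) (hc₁ n)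

lemma altOrbit_two_mul_add_one (z : ℂ) (n : ℕ) :
    altOrbit c₁ c₂ z (2 * n + 1) = altOrbit c₁ c₂ z (2 * n) ^ 2 + c₁ := by
  simp [altOrbit]

lemma altOrbit_two_mul (z : ℂ) (n : ℕ) : altOrbit c₁ c₂ z (2 * n) = (quartic c₁ c₂)^[n] z := by
  induction n with
  | zero => rfl
  | succ n ih =>
    rw [Function.iterate_succ_apply', ← ih, mul_add_one]
    simp [altOrbit, quartic]

lemma altK_eq_setOf_isBounded_range_iterate :
    altK c₁ c₂ = {z | IsBounded (range fun n => (quartic c₁ c₂)^[n] z)} := by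
  ext z
  simp only [altK, mem_ofPred_eq]
  refine ⟨fun hb => hb.subset (range_subset_iff.2 fun n => ⟨2 * n, altOrbit_two_mul c₁ c₂ z n⟩),
    fun hb => ?_⟩
  have hK := hb.isCompact_closure
  refine (hK.union (hK.image (by fun_prop : Continuous fun w : ℂ => w ^ 2 + c₁))).isBounded.subset
    (range_subset_iff.2 fun m => ?_)
  obtain ⟨n, rfl | rfl⟩ := Nat.even_or_odd' m
  · exact Or.inl (subset_closure ⟨n, (altOrbit_two_mul c₁ c₂ z n).symm⟩)
  · refine Or.inr ⟨_, subset_closure ⟨n, rfl⟩, ?_⟩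
    rw [altOrbit_two_mul_add_one, altOrbit_two_mul]

end Quartic

theorem stmt_14 (c₁ c₂ : ℂ)
    (h : ∀ w : ℂ, deriv (fun w : ℂ => (w ^ 2 + c₁) ^ 2 + c₂) w = 0 →
      Bornology.IsBounded
        (Set.range fun n : ℕ => (fun w : ℂ => (w ^ 2 + c₁) ^ 2 + c₂)^[n] w)) :
    IsConnected (altK c₁ c₂) := by
  change ∀ w, deriv (quartic c₁ c₂) w = 0 → IsBounded (range fun n => (quartic c₁ c₂)^[n] w)
    at h
  set R : ℝ := 2 + ‖c₁‖ + ‖c₂‖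
  have hgrow : NormGrowsBeyond (quartic c₁ c₂) R := normGrowsBeyond_quartic c₁ c₂
  set S : ℕ → Set ℂ := fun n => (quartic c₁ c₂)^[n] ⁻¹' closedBall 0 R
  have hcrit : ∀ w, deriv (quartic c₁ c₂) w = 0 → ∀ n, quartic c₁ c₂ w ∈ S n := fun w hw n => by
    have hbound := hgrow.isBounded_range_iterate_iff.1 (h w hw) (n + 1)
    rw [Function.iterate_succ_apply] at hbound
    exact mem_closedBall_zero_iff.2 hbound
  obtain ⟨w₀, hw₀⟩ := IsAlgClosed.exists_pow_nat_eq (-c₁) two_pos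
  have hc₂ : ∀ n, c₂ ∈ S n := by
    have hQw₀ : quartic c₁ c₂ w₀ = c₂ := by simp [quartic, hw₀]
    exact hQw₀ ▸ hcrit w₀ (by rw [deriv_quartic, hw₀]; ring)
  have hc₁ : ∀ n, c₁ ^ 2 + c₂ ∈ S n := by
    have hQ0 : quartic c₁ c₂ 0 = c₁ ^ 2 + c₂ := by simp [quartic]
    exact hQ0 ▸ hcrit 0 (by rw [deriv_quartic]; ring)
  have hK : altK c₁ c₂ = ⋂ n, S n := by
    ext z
    simp [altK_eq_setOf_isBounded_range_iterate, hgrow.isBounded_range_iterate_iff, S]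
  have hS := isCompact_and_isPreconnected_preimage_iterate_quartic c₁ c₂ hc₂ hc₁
  rw [hK]
  exact ⟨⟨c₂, mem_iInter.2 hc₂⟩, isPreconnected_iInter_of_directed
    hgrow.antitone_preimage_iterate_closedBall.directed_ge (fun n => (hS n).1) fun n => (hS n).2⟩
end

section
/- Let c ∈ ℂ and P_c(w) = w² + c. If the orbit (P_c^{∘n}(0)) of the critical point 0 is bounded (i.e. c belongs to the Mandelbrot set), then the filled Julia set K_c = {z ∈ ℂ : (P_c^{∘n}(z)) is bounded} is a connected subset of ℂ. -/
open Set Metric Bornology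

private lemma stmt17_sq_cases {a b : ℂ} (h : a ^ 2 = b ^ 2) : a = b ∨ a = -b := by
  have h0 : (a - b) * (a + b) = 0 := by linear_combination h
  rcases mul_eq_zero.1 h0 with h1 | h1
  · exact Or.inl (sub_eq_zero.mp h1)
  · exact Or.inr (eq_neg_of_add_eq_zero_left h1)

/-- Key step: if `K` is closed preconnected containing `c`, and the preimage `V` of `K`
under `w ↦ w^2 + c` is compact, then for any closed partition `A ∪ B = V` with `0 ∈ A`,
`B` is empty. -/
private lemma stmt17_key (c : ℂ) {K : Set ℂ} (hKcl : IsClosed K)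
    (hKconn : IsPreconnected K) (hc : c ∈ K)
    (hV : IsCompact ((fun w : ℂ => w ^ 2 + c) ⁻¹' K))
    {A B : Set ℂ} (hA : IsClosed A) (hB : IsClosed B)
    (hAB : A ∪ B = (fun w : ℂ => w ^ 2 + c) ⁻¹' K) (hdis : Disjoint A B)
    (h0 : (0 : ℂ) ∈ A) : B = ∅ := by
  set P : ℂ → ℂ := fun w => w ^ 2 + c with hPdef
  set V : Set ℂ := P ⁻¹' K with hVdef
  have hsymV : ∀ w : ℂ, w ∈ V → -w ∈ V := by
    intro w hw
    simpa [hVdef, hPdef, neg_sq] using hw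
  set nA : Set ℂ := (fun w : ℂ => -w) ⁻¹' A with hnAdef
  set nB : Set ℂ := (fun w : ℂ => -w) ⁻¹' B with hnBdef
  have hnA : IsClosed nA := hA.preimage continuous_neg
  have hnB : IsClosed nB := hB.preimage continuous_neg
  set S : Set ℂ := A ∩ nA with hSdef
  set T : Set ℂ := B ∩ nB with hTdef
  set M : Set ℂ := (A ∩ nB) ∪ (B ∩ nA) with hMdef
  have hAV : A ⊆ V := by rw [← hAB]; exact subset_union_left
  have hBV : B ⊆ V := by rw [← hAB]; exact subset_union_right
  have hScomp : IsCompact S :=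
    hV.of_isClosed_subset (hA.inter hnA) (fun x hx => hAV hx.1)
  have hTcomp : IsCompact T :=
    hV.of_isClosed_subset (hB.inter hnB) (fun x hx => hBV hx.1)
  have hMcomp : IsCompact M := by
    apply hV.of_isClosed_subset ((hA.inter hnB).union (hB.inter hnA))
    rintro x (hx | hx)
    · exact hAV hx.1
    · exact hBV hx.1
  have hPcont : Continuous P := by fun_prop
  have himS : IsClosed (P '' S) := (hScomp.image hPcont).isClosed
  have himT : IsClosed (P '' T) := (hTcomp.image hPcont).isClosed
  have himM : IsClosed (P '' M) := (hMcomp.image hPcont).isClosed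
  -- the images cover K
  have hcover : K ⊆ P '' S ∪ (P '' T ∪ P '' M) := by
    intro y hy
    obtain ⟨w, hw⟩ := IsAlgClosed.exists_pow_nat_eq (y - c) (two_pos)
    have hPw : P w = y := by simp [hPdef, hw]
    have hwV : w ∈ V := by simp [hVdef, hPw, hy]
    have hnwV : -w ∈ V := hsymV w hwV
    have hw1 : w ∈ A ∪ B := by rw [hAB]; exact hwV
    have hw2 : -w ∈ A ∪ B := by rw [hAB]; exact hnwV
    rcases hw1 with h1 | h1 <;> rcases hw2 with h2 | h2
    · exact Or.inl ⟨w, ⟨h1, h2⟩, hPw⟩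
    · exact Or.inr (Or.inr ⟨w, Or.inl ⟨h1, h2⟩, hPw⟩)
    · exact Or.inr (Or.inr ⟨w, Or.inr ⟨h1, h2⟩, hPw⟩)
    · exact Or.inr (Or.inl ⟨w, ⟨h1, h2⟩, hPw⟩)
  -- basic fiber fact
  have hfiber : ∀ w w' : ℂ, P w = P w' → w' = w ∨ w' = -w := by
    intro w w' hww
    have : w' ^ 2 = w ^ 2 := by
      have h' := hww
      simp only [hPdef] at h'
      linear_combination -h'
    exact stmt17_sq_cases this
  -- disjointness of images
  have hSsym : ∀ w : ℂ, w ∈ S → -w ∈ S := by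
    rintro w ⟨h1, h2⟩
    exact ⟨h2, by simpa [hnAdef] using h1⟩
  have hdisAB := Set.disjoint_left.mp hdis
  have hdST : Disjoint (P '' S) (P '' T) := by
    rw [Set.disjoint_left]
    rintro y ⟨w, hwS, hwP⟩ ⟨w', hwT, hwP'⟩
    have : w' = w ∨ w' = -w := hfiber w w' (hwP.trans hwP'.symm)
    have hwS' : w' ∈ S := by rcases this with rfl | rfl; exacts [hwS, hSsym w hwS]
    exact hdisAB hwS'.1 hwT.1
  have hdSM : Disjoint (P '' S) (P '' M) := by
    rw [Set.disjoint_left]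
    rintro y ⟨w, hwS, hwP⟩ ⟨w', hwM, hwP'⟩
    have : w' = w ∨ w' = -w := hfiber w w' (hwP.trans hwP'.symm)
    have hwS' : w' ∈ S := by rcases this with rfl | rfl; exacts [hwS, hSsym w hwS]
    rcases hwM with hm | hm
    · have : -w' ∈ A := (hSsym w' hwS').1
      exact hdisAB this (by simpa [hnBdef] using hm.2)
    · exact hdisAB hwS'.1 hm.1
  -- K is preconnected, so K ⊆ P '' S or K ⊆ P '' T ∪ P '' M
  have h0S : (0 : ℂ) ∈ S := ⟨h0, by simpa [hnAdef] using h0⟩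
  have hKsub : K ⊆ P '' S ∨ K ⊆ P '' T ∪ P '' M := by
    have := (isPreconnected_iff_subset_of_fully_disjoint_closed hKcl).mp hKconn
      (P '' S) (P '' T ∪ P '' M) himS (himT.union himM) hcover
      (by rw [disjoint_union_right]; exact ⟨hdST, hdSM⟩)
    exact this
  have hcS : c ∈ P '' S := by
    rcases hKsub with hsub | hsub
    · exact hsub hc
    · exfalso
      have hcmem := hsub hc
      have hzero : ∀ w : ℂ, P w = c → w = 0 := by
        intro w hw
        have : w ^ 2 = 0 := by
          have := hw; simp only [hPdef] at this; linear_combination this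
        exact pow_eq_zero_iff (two_ne_zero).symm.symm |>.mp this
      rcases hcmem with ⟨w, hwTM, hwP⟩ | ⟨w, hwTM, hwP⟩
      · have hw0 : w = 0 := hzero w hwP
        subst hw0
        exact hdisAB h0 hwTM.1
      · have hw0 : w = 0 := hzero w hwP
        subst hw0
        rcases hwTM with hm | hm
        · exact hdisAB h0 (by simpa [hnBdef] using hm.2)
        · exact hdisAB h0 hm.1
  have hKS : K ⊆ P '' S := by
    rcases hKsub with hsub | hsub
    · exact hsub
    · exfalso
      have := hsub hc
      exact absurd hcS (by
        intro hx
        rcases this with hT' | hM'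
        · exact Set.disjoint_left.mp hdST hx hT'
        · exact Set.disjoint_left.mp hdSM hx hM')
  -- conclude B = ∅
  rw [Set.eq_empty_iff_forall_notMem]
  intro b hb
  have hbV : b ∈ V := hBV hb
  have hPbK : P b ∈ K := hbV
  have hPbS : P b ∈ P '' S := hKS hPbK
  have hnb : -b ∈ A ∪ B := by rw [hAB]; exact hsymV b hbV
  rcases hnb with hnb | hnb
  · -- b ∈ B ∩ nA ⊆ M
    have hbM : b ∈ M := Or.inr ⟨hb, by simpa [hnAdef] using hnb⟩
    exact Set.disjoint_left.mp hdSM hPbS ⟨b, hbM, rfl⟩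
  · have hbT : b ∈ T := ⟨hb, by simpa [hnBdef] using hnb⟩
    exact Set.disjoint_left.mp hdST hPbS ⟨b, hbT, rfl⟩

private lemma stmt17_preimage_preconnected (c : ℂ) {K : Set ℂ} (hKcl : IsClosed K)
    (hKconn : IsPreconnected K) (hc : c ∈ K)
    (hV : IsCompact ((fun w : ℂ => w ^ 2 + c) ⁻¹' K)) :
    IsPreconnected ((fun w : ℂ => w ^ 2 + c) ⁻¹' K) := by
  set P : ℂ → ℂ := fun w => w ^ 2 + c with hPdef
  set V : Set ℂ := P ⁻¹' K with hVdef
  have hVcl : IsClosed V := hKcl.preimage (by fun_prop)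
  rw [isPreconnected_iff_subset_of_fully_disjoint_closed hVcl]
  intro u v hu hv huv hd
  have h0V : (0 : ℂ) ∈ V := by simpa [hVdef, hPdef] using hc
  set A : Set ℂ := V ∩ u with hAdef
  set B : Set ℂ := V ∩ v with hBdef
  have hA : IsClosed A := hVcl.inter hu
  have hB : IsClosed B := hVcl.inter hv
  have hABV : A ∪ B = V := by
    rw [hAdef, hBdef, ← inter_union_distrib_left]
    exact inter_eq_left.mpr huv
  have hdAB : Disjoint A B :=
    hd.mono inter_subset_right inter_subset_right
  rcases huv h0V with h0u | h0v
  · have hBempty : B = ∅ :=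
      stmt17_key c hKcl hKconn hc hV hA hB hABV hdAB ⟨h0V, h0u⟩
    left
    intro z hz
    have : z ∈ A ∪ B := by rw [hABV]; exact hz
    rcases this with hz' | hz'
    · exact hz'.2
    · exact absurd hz' (by rw [hBempty]; exact notMem_empty z)
  · have hBAV : B ∪ A = V := by rw [union_comm]; exact hABV
    have hAempty : A = ∅ :=
      stmt17_key c hKcl hKconn hc hV hB hA hBAV hdAB.symm ⟨h0V, h0v⟩
    right
    intro z hz
    have : z ∈ A ∪ B := by rw [hABV]; exact hz
    rcases this with hz' | hz'
    · exact absurd hz' (by rw [hAempty]; exact notMem_empty z)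
    · exact hz'.2

theorem stmt_17 (c : ℂ)
    (h : Bornology.IsBounded
      (Set.range fun n : ℕ => (fun w : ℂ => w ^ 2 + c)^[n] 0)) :
    IsConnected {z : ℂ | Bornology.IsBounded
      (Set.range fun n : ℕ => (fun w : ℂ => w ^ 2 + c)^[n] z)} := by
  obtain ⟨M, hM⟩ := (Metric.isBounded_iff_subset_closedBall 0).1 h
  set P : ℂ → ℂ := fun w => w ^ 2 + c with hPdef
  set R : ℝ := max (‖c‖ + 2) M with hRdef
  have hRc : ‖c‖ + 2 ≤ R := le_max_left _ _
  have hRM : M ≤ R := le_max_right _ _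
  have hcnn : (0 : ℝ) ≤ ‖c‖ := norm_nonneg c
  -- escape estimate
  have hesc : ∀ w : ℂ, R < ‖w‖ → ‖w‖ + 1 ≤ ‖P w‖ := by
    intro w hw
    have h1 : ‖w ^ 2‖ - ‖-c‖ ≤ ‖w ^ 2 - -c‖ := norm_sub_norm_le _ _
    have h2 : ‖w ^ 2‖ = ‖w‖ ^ 2 := by rw [norm_pow]
    simp only [norm_neg, sub_neg_eq_add] at h1
    have h3 : ‖w‖ ^ 2 - ‖c‖ ≤ ‖P w‖ := by rw [← h2]; exact h1
    nlinarith [norm_nonneg (P w), hw.le, hRc]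
  set U : ℕ → Set ℂ := fun n => P^[n] ⁻¹' closedBall 0 R with hUdef
  have hU0 : U 0 = closedBall 0 R := by simp [hUdef]
  have hUsucc : ∀ n, U (n + 1) = P ⁻¹' U n := by
    intro n
    ext z
    simp [hUdef, Function.iterate_succ_apply]
  have hanti : ∀ n, U (n + 1) ⊆ U n := by
    intro n z hz
    simp only [hUdef, mem_preimage, mem_closedBall_zero_iff] at hz ⊢
    by_contra hcon
    push_neg at hcon
    have := hesc _ hcon
    rw [← Function.iterate_succ_apply' P n z] at this
    linarith
  have hUanti : Antitone U := antitone_nat_of_succ_le hanti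
  have hUcl : ∀ n, IsClosed (U n) :=
    fun n => IsClosed.preimage (((continuous_pow 2).add continuous_const).iterate n) Metric.isClosed_closedBall
  have hUcomp : ∀ n, IsCompact (U n) := by
    intro n
    apply (isCompact_closedBall (0 : ℂ) R).of_isClosed_subset (hUcl n)
    rw [← hU0]
    exact hUanti (Nat.zero_le n)
  have h0mem : ∀ n, (0 : ℂ) ∈ U n := by
    intro n
    simp only [hUdef, mem_preimage, mem_closedBall_zero_iff]
    have := hM ⟨n, rfl⟩
    rw [mem_closedBall_zero_iff] at this
    exact this.trans hRM
  have hcmem : ∀ n, c ∈ U n := by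
    intro n
    simp only [hUdef, mem_preimage, mem_closedBall_zero_iff]
    have hc0 : P 0 = c := by simp [hPdef]
    have : P^[n] c = P^[n + 1] 0 := by
      rw [Function.iterate_succ_apply, hc0]
    rw [this]
    have := hM ⟨n + 1, rfl⟩
    rw [mem_closedBall_zero_iff] at this
    exact this.trans hRM
  have hUconn : ∀ n, IsPreconnected (U n) := by
    intro n
    induction n with
    | zero => rw [hU0]; exact (convex_closedBall (0 : ℂ) R).isPreconnected
    | succ n ih =>
      rw [hUsucc n]
      exact stmt17_preimage_preconnected c (hUcl n) ih (hcmem n)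
        (by rw [← hUsucc n]; exact hUcomp (n + 1))
  -- identify the filled Julia set with the intersection
  have hEq : {z : ℂ | Bornology.IsBounded (Set.range fun n : ℕ => P^[n] z)}
      = ⋂ n, U n := by
    ext z
    simp only [mem_setOf_eq, mem_iInter, hUdef, mem_preimage, mem_closedBall_zero_iff]
    constructor
    · intro hz n
      obtain ⟨M', hM'⟩ := (Metric.isBounded_iff_subset_closedBall 0).1 hz
      by_contra hcon
      push_neg at hcon
      have hgrow : ∀ k : ℕ, R + k < ‖P^[n + k] z‖ := by
        intro k
        induction k with
        | zero => simpa using hcon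
        | succ k ihk =>
          have hRk : R < ‖P^[n + k] z‖ := by
            have : (0 : ℝ) ≤ k := Nat.cast_nonneg k
            linarith
          have := hesc _ hRk
          rw [← Function.iterate_succ_apply' P (n + k) z] at this
          have heq : n + (k + 1) = (n + k) + 1 := by ring
          rw [heq]
          push_cast
          linarith
      obtain ⟨k, hk⟩ := exists_nat_gt (M' - R)
      have h1 := hgrow k
      have h2 := hM' ⟨n + k, rfl⟩
      rw [mem_closedBall_zero_iff] at h2
      linarith
    · intro hz
      rw [Metric.isBounded_iff_subset_closedBall 0]
      exact ⟨R, by rintro x ⟨n, rfl⟩; rw [mem_closedBall_zero_iff]; exact hz n⟩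
  rw [show {z : ℂ | Bornology.IsBounded
      (Set.range fun n : ℕ => (fun w : ℂ => w ^ 2 + c)^[n] z)}
      = {z : ℂ | Bornology.IsBounded (Set.range fun n : ℕ => P^[n] z)} from rfl, hEq]
  constructor
  · exact ⟨0, mem_iInter.mpr h0mem⟩
  -- intersection of a nested family of compact connected sets is preconnected
  have hIcl : IsClosed (⋂ n, U n) := isClosed_iInter hUcl
  rw [isPreconnected_iff_subset_of_fully_disjoint_closed hIcl]
  intro u v hu hv hsub hd
  obtain ⟨u', v', hu', hv', huu', hvv', hd'⟩ := NormalSpace.normal u v hu hv hd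
  set C : ℕ → Set ℂ := fun n => U n \ (u' ∪ v') with hCdef
  have hCcl : ∀ n, IsClosed (C n) := fun n => (hUcl n).sdiff (hu'.union hv')
  have hCcomp : ∀ n, IsCompact (C n) :=
    fun n => (hUcomp n).of_isClosed_subset (hCcl n) diff_subset
  have hCanti : Antitone C := fun i j hij => diff_subset_diff_left (hUanti hij)
  have hCempty : ∃ n, C n = ∅ := by
    by_contra hcon
    push_neg at hcon
    have hne : ∀ n, (C n).Nonempty := hcon
    have hinter : (⋂ n, C n).Nonempty :=
      IsCompact.nonempty_iInter_of_directed_nonempty_isCompact_isClosed C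
        hCanti.directed_ge hne hCcomp hCcl
    obtain ⟨x, hx⟩ := hinter
    rw [mem_iInter] at hx
    have hxU : x ∈ ⋂ n, U n := mem_iInter.mpr fun n => (hx n).1
    rcases hsub hxU with hxu | hxv
    · exact (hx 0).2 (Or.inl (huu' hxu))
    · exact (hx 0).2 (Or.inr (hvv' hxv))
  obtain ⟨n, hn⟩ := hCempty
  have hUn : U n ⊆ u' ∪ v' := by
    intro x hx
    by_contra hcon
    have : x ∈ C n := ⟨hx, hcon⟩
    rw [hn] at this
    exact this
  have := isPreconnected_iff_subset_of_disjoint.mp (hUconn n) u' v' hu' hv' hUn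
    (by
      rw [Set.eq_empty_iff_forall_notMem]
      rintro x ⟨_, hx1, hx2⟩
      exact Set.disjoint_left.mp hd' hx1 hx2)
  rcases this with hsu | hsv
  · left
    intro z hz
    have hz' : z ∈ u' := hsu ((iInter_subset U n) hz)
    rcases hsub hz with hzu | hzv
    · exact hzu
    · exact absurd hz' (by
        intro hcon
        exact Set.disjoint_left.mp hd' hcon (hvv' hzv))
  · right
    intro z hz
    have hz' : z ∈ v' := hsv ((iInter_subset U n) hz)
    rcases hsub hz with hzu | hzv
    · exact absurd hz' (by
        intro hcon
        exact Set.disjoint_right.mp hd' hcon (huu' hzu))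
    · exact hzv
end

section
/- Let c ∈ ℂ and P_c(w) = w² + c. If the orbit (P_c^{∘n}(0)) of the critical point 0 is unbounded (i.e. c lies outside the Mandelbrot set), then the filled Julia set K_c = {z ∈ ℂ : (P_c^{∘n}(z)) is bounded} is totally disconnected as a topological subspace of ℂ. -/
/-!
Since the critical orbit escapes, for `j ≥ m` the critical value `c` lies outside the sublevel
set `V_j = {z | ‖P_c^j z‖ < R}`. By the maximum principle no loop in `V_j` winds around `c`, so
`z ↦ z - c` has a continuous logarithm, hence a holomorphic square root, on every component of
`V_j`. Composing these square roots gives holomorphic branches `G_n` of `P_c^{-n}`, bounded by `R`,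
from a component of `V_m` onto the component of `V_{m+n}` through a given point `x` of `K_c`.

If a connected subset of `K_c` contained `x ≠ y`, then along an ultrafilter the `G_n` converge
locally uniformly (Arzelà–Ascoli and the Schwarz lemma) to a holomorphic `g` taking the values
`x` and `y`. So `g` is open, and by Hurwitz every value of `g` near `x` is taken by many `G_n`,
hence lies in `K_c`: `x` is an interior point of `K_c`. This is absurd, since a component of the
interior of `K_c` has a boundary point, which is joined to that component inside `K_c` and would
be interior as well.
-/

open Complex Metric Set Filter Topology Bornology unitInterval

namespace QuadraticJulia

section Winding

theorem sub_eq_sub_of_exp_eq {μ ν : C(I, ℂ)} (h : ∀ t, exp (μ t) = exp (ν t)) :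
    μ 1 - μ 0 = ν 1 - ν 0 := by
  have hconst := isCoveringMap_exp.const_of_comp (μ - ν).continuous
    (fun t t' => by ext; simp [exp_sub, h]) 1 0
  simp only [ContinuousMap.sub_apply] at hconst
  linear_combination hconst

/-- A nonzero winding number of `γ` around `a`, expressed without integrals: some continuous
logarithm of `γ - a` does not close up. -/
def WindsAround (γ : C(I, ℂ)) (a : ℂ) : Prop :=
  ∃ μ : C(I, ℂ), (∀ t, exp (μ t) = γ t - a) ∧ μ 1 ≠ μ 0

variable {γ : C(I, ℂ)} {a b : ℂ}

theorem WindsAround.notMem_range (h : WindsAround γ a) : a ∉ range γ := by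
  rintro ⟨t, rfl⟩
  obtain ⟨μ, hμ, -⟩ := h
  exact exp_ne_zero _ ((hμ t).trans (sub_self _))

theorem WindsAround.of_norm_sub_lt (hγ : γ 1 = γ 0) (h : WindsAround γ a)
    (hab : ∀ t, ‖b - a‖ < ‖γ t - a‖) : WindsAround γ b := by
  obtain ⟨μ, hμ, hμ1⟩ := h
  have hne : ∀ t, γ t - a ≠ 0 := fun t => by simp [← hμ t]
  have hslit : ∀ t, (γ t - b) / (γ t - a) ∈ slitPlane := fun t => by
    have : (γ t - b) / (γ t - a) = 1 + (a - b) / (γ t - a) := by field_simp [hne t]; ring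
    rw [this]
    refine mem_slitPlane_of_norm_lt_one ?_
    rw [norm_div, norm_sub_rev, div_lt_one ((norm_nonneg _).trans_lt (hab t))]
    exact hab t
  let ν : C(I, ℂ) := ⟨fun t => μ t + log ((γ t - b) / (γ t - a)),
    μ.continuous.add (((γ.continuous.sub continuous_const).div
      (γ.continuous.sub continuous_const) hne).clog hslit)⟩
  refine ⟨ν, fun t => ?_, fun h => hμ1 ?_⟩
  · simp only [ν, ContinuousMap.coe_mk, exp_add, hμ t, exp_log (slitPlane_ne_zero (hslit t))]
    field_simp [hne t]
  · simpa [ν, hγ] using h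

theorem eventually_windsAround_iff (hγ : γ 1 = γ 0) (hb : b ∉ range γ) :
    ∀ᶠ a in 𝓝 b, WindsAround γ a ↔ WindsAround γ b := by
  have hd : 0 < infDist b (range γ) :=
    ((isCompact_range γ.continuous).isClosed.notMem_iff_infDist_pos ⟨γ 0, 0, rfl⟩).mp hb
  filter_upwards [ball_mem_nhds b (half_pos hd)] with a ha
  have hle : ∀ t, infDist b (range γ) ≤ ‖γ t - b‖ := fun t => by
    rw [← dist_eq_norm, dist_comm]; exact infDist_le_dist_of_mem ⟨t, rfl⟩
  rw [mem_ball, dist_eq_norm] at ha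
  refine ⟨fun h => h.of_norm_sub_lt hγ fun t => ?_, fun h => h.of_norm_sub_lt hγ fun t => ?_⟩
  · have := norm_sub_le_norm_sub_add_norm_sub (γ t) a b
    have := hle t
    rw [norm_sub_rev b a]
    linarith
  · have := hle t
    linarith

theorem isOpen_setOf_windsAround (hγ : γ 1 = γ 0) : IsOpen {a | WindsAround γ a} :=
  isOpen_iff_mem_nhds.mpr fun _ ha =>
    (eventually_windsAround_iff hγ ha.notMem_range).mono fun _ h => h.mpr ha

theorem frontier_setOf_windsAround_subset (hγ : γ 1 = γ 0) :
    frontier {a | WindsAround γ a} ⊆ range γ := by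
  intro b hb
  rw [(isOpen_setOf_windsAround hγ).frontier_eq] at hb
  by_contra hbγ
  obtain ⟨hcl, hnot⟩ := hb
  exact (mem_closure_iff_frequently.mp hcl).and_eventually
    (eventually_windsAround_iff hγ hbγ) |>.exists.elim fun _ ⟨ha, hiff⟩ => hnot (hiff.mp ha)

theorem isBounded_setOf_windsAround (hγ : γ 1 = γ 0) : IsBounded {a | WindsAround γ a} := by
  obtain ⟨M, hM⟩ := isBounded_iff_forall_norm_le.mp (isCompact_range γ.continuous).isBounded
  refine isBounded_iff_forall_norm_le.mpr ⟨M, fun a ⟨μ, hμ, hμ1⟩ => ?_⟩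
  by_contra! haM
  have ha0 : 0 < ‖a‖ := (norm_nonneg _).trans_lt ((hM _ ⟨0, rfl⟩).trans_lt haM)
  have ha : a ≠ 0 := norm_pos_iff.mp ha0
  have hslit : ∀ t, 1 - γ t / a ∈ slitPlane := fun t => by
    rw [sub_eq_add_neg]
    refine mem_slitPlane_of_norm_lt_one ?_
    rw [norm_neg, norm_div, div_lt_one ha0]
    exact (hM _ ⟨t, rfl⟩).trans_lt haM
  let ν : C(I, ℂ) := ⟨fun t => log (-a) + log (1 - γ t / a),
    continuous_const.add ((continuous_const.sub (γ.continuous.div_const a)).clog hslit)⟩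
  have hgap := sub_eq_sub_of_exp_eq (μ := μ) (ν := ν) fun t => by
    simp only [ν, ContinuousMap.coe_mk, exp_add, hμ t, exp_log (neg_ne_zero.mpr ha),
      exp_log (slitPlane_ne_zero (hslit t))]
    field_simp
    ring
  simp only [ν, ContinuousMap.coe_mk, hγ, sub_self] at hgap
  exact hμ1 (sub_eq_zero.mp hgap)

theorem WindsAround.norm_le {g : ℂ → ℂ} {R : ℝ} (hg : Differentiable ℂ g) (hγ : γ 1 = γ 0)
    (hR : ∀ t, ‖g (γ t)‖ ≤ R) (ha : WindsAround γ a) : ‖g a‖ ≤ R :=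
  Complex.norm_le_of_forall_mem_frontier_norm_le (isBounded_setOf_windsAround hγ)
    hg.diffContOnCl (fun w hw => by
      obtain ⟨t, rfl⟩ := frontier_setOf_windsAround_subset hγ hw
      exact hR t) (subset_closure ha)

theorem lift_apply_one_eq_of_norm_le {W : Set ℂ} {g : ℂ → ℂ} {R : ℝ} (hg : Differentiable ℂ g)
    (hW : ∀ w ∈ W, ‖g w‖ ≤ R) (ha : R < ‖g a‖) {γ γ' : C(I, W)} {Γ Γ' : C(I, ℂ)}
    (h0 : γ 0 = γ' 0) (h1 : γ 1 = γ' 1) (hΓ0 : Γ 0 = Γ' 0)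
    (hΓ : ∀ t, exp (Γ t) = γ t - a) (hΓ' : ∀ t, exp (Γ' t) = γ' t - a) : Γ 1 = Γ' 1 := by
  set d := Γ 1 - Γ' 1
  have hd : exp d = 1 := by
    rw [exp_sub, hΓ, hΓ', h1, div_self (by rw [← hΓ']; exact exp_ne_zero _)]
  -- Going along `γ` and back along `γ'` is a loop in `W`, lifted by `Γ` followed by the
  -- translate of `Γ'` that starts at `Γ 1`; this lift has to close up.
  let β : Path (γ 0) (γ 0) := (Path.mk γ rfl rfl).trans (Path.mk γ' h0.symm h1.symm).symm
  let Λ : Path (Γ 0) (Γ 0 + d) := (Path.mk Γ rfl rfl).trans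
    (Path.mk ⟨fun t => Γ' t + d, by fun_prop⟩ (by rw [hΓ0]) (by simp [d])).symm
  by_contra hne
  refine ha.not_ge (WindsAround.norm_le (γ := (β.map continuous_subtype_val).toContinuousMap)
    hg (by simp) (fun t => hW _ (β t).2)
    ⟨Λ.toContinuousMap, fun t => ?_, by simpa [d, sub_eq_zero] using hne⟩)
  change exp (Λ t) = (β t : ℂ) - a
  simp only [Λ, β, Path.trans_apply]
  split_ifs
  · exact hΓ _
  · simp [exp_add, hd, hΓ']

theorem exists_continuousOn_exp_eq_sub {W : Set ℂ} (hWo : IsOpen W) (hWc : IsPreconnected W)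
    {g : ℂ → ℂ} {R : ℝ} (hg : Differentiable ℂ g) (hW : ∀ w ∈ W, ‖g w‖ ≤ R) (ha : R < ‖g a‖) :
    ∃ L : ℂ → ℂ, ContinuousOn L W ∧ ∀ w ∈ W, exp (L w) = w - a := by
  classical
  rcases W.eq_empty_or_nonempty with rfl | ⟨w₀, hw₀⟩
  · exact ⟨0, continuousOn_empty _, fun _ h => h.elim⟩
  have haW : ∀ w ∈ W, w - a ≠ 0 := fun w hw h => ha.not_ge (sub_eq_zero.mp h ▸ hW w hw)
  have : PathConnectedSpace W := isPathConnected_iff_pathConnectedSpace.mp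
    (hWo.isConnected_iff_isPathConnected.mp ⟨⟨w₀, hw₀⟩, hWc⟩)
  have : LocallyPathConnectedSpace W := hWo.locallyPathConnectedSpace
  let f : C(W, {z : ℂ // z ≠ 0}) := ⟨fun w => ⟨w - a, haW w w.2⟩, by fun_prop⟩
  have hlift : ∀ {δ : C(I, W)} {Δ : C(I, ℂ)}, (fun z : ℂ => (⟨exp z, exp_ne_zero z⟩ :
      {z : ℂ // z ≠ 0})) ∘ Δ = f.comp δ → ∀ t, exp (Δ t) = δ t - a :=
    fun h t => congr_arg Subtype.val (congr_fun h t)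
  refine (isCoveringMap_exp.isLocalHomeomorph.existsUnique_continuousMap_lifts f ⟨w₀, hw₀⟩
    (log (w₀ - a)) (Subtype.ext (exp_log (haW w₀ hw₀))) (fun γ hγ => ?_)
    (fun γ γ' Γ Γ' hγ hγ' hΓ hΓ' hΓγ hΓγ' h1 => lift_apply_one_eq_of_norm_le hg
      hW ha (hγ.trans hγ'.symm) h1 (hΓ.trans hΓ'.symm) (hlift hΓγ)
      (hlift hΓγ'))).exists.elim fun F hF => ?_
  · obtain ⟨Γ, hΓ, hΓ0⟩ := isCoveringMap_exp.exists_path_lifts (f.comp γ) (log (w₀ - a))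
      (by simp [hγ, f, exp_log (haW w₀ hw₀)])
    exact ⟨Γ, hΓ0, hΓ⟩
  · refine ⟨fun w => if h : w ∈ W then F ⟨w, h⟩ else 0, ?_, fun w hw => ?_⟩
    · rw [continuousOn_iff_continuous_domRestrict]
      convert F.continuous
      ext w
      simp [w.2]
    · simpa [hw, f] using congr_arg Subtype.val (congr_fun hF.2 ⟨w, hw⟩)

theorem exists_differentiableOn_sq_eq_sub {W : Set ℂ} (hWo : IsOpen W) {L : ℂ → ℂ}
    (hLc : ContinuousOn L W) (hL : ∀ w ∈ W, exp (L w) = w - a) {u₀ x₀ : ℂ} (hu₀ : u₀ ∈ W)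
    (hx₀ : x₀ ^ 2 = u₀ - a) :
    ∃ h : ℂ → ℂ, DifferentiableOn ℂ h W ∧ h u₀ = x₀ ∧ ∀ u ∈ W, h u ^ 2 = u - a := by
  have hsq : ∀ u, exp (L u / 2) ^ 2 = exp (L u) := fun u => by
    rw [← exp_nat_mul]; congr 1; push_cast; ring
  set s := x₀ / exp (L u₀ / 2)
  have hs : s ^ 2 = 1 := by
    rw [div_pow, hsq, hL u₀ hu₀, ← hx₀, div_self]
    rw [hx₀, ← hL u₀ hu₀]; exact exp_ne_zero _
  let h : ℂ → ℂ := fun u => s * exp (L u / 2)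
  have hh : ∀ u ∈ W, h u ^ 2 = u - a := fun u hu => by
    simp only [h, mul_pow, hs, one_mul, hsq, hL u hu]
  refine ⟨h, fun u hu => ?_, by simp [h, s, exp_ne_zero], hh⟩
  have hcont : ContinuousAt h u :=
    continuousAt_const.mul ((hLc.continuousAt (hWo.mem_nhds hu)).div_const 2).cexp
  have h0 : h u ≠ 0 := fun h0 => exp_ne_zero (L u) (by rw [hL u hu, ← hh u hu, h0]; simp)
  have hinv := HasDerivAt.of_local_left_inverse (f := fun z => z ^ 2 + a) hcont
    ((hasDerivAt_pow 2 (h u)).add_const a) (by simpa using h0)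
    (eventually_of_mem (hWo.mem_nhds hu) fun v hv => by simp [hh v hv])
  exact hinv.differentiableAt.differentiableWithinAt

end Winding

section NormalFamilies

theorem equicontinuousAt_of_norm_le {ι : Type*} {G : ι → ℂ → ℂ} {z : ℂ} {r M : ℝ}
    (hr : 0 < r) (hd : ∀ i, DifferentiableOn ℂ (G i) (ball z r))
    (hb : ∀ i, ∀ w ∈ ball z r, ‖G i w‖ ≤ M) : EquicontinuousAt G z := by
  refine equicontinuousAt_of_continuity_modulus (fun w => 2 * M / r * dist w z) ?_ G
    (eventually_of_mem (ball_mem_nhds z hr) fun w hw i => ?_)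
  · simpa using ((continuous_id.dist (continuous_const (y := z))).tendsto z).const_mul (2 * M / r)
  · rw [dist_comm]
    refine dist_le_div_mul_dist_of_mapsTo_ball (hd i) (fun v hv => ?_) hw
    rw [mem_closedBall, dist_eq_norm]
    linarith [norm_sub_le (G i v) (G i z), hb i v hv, hb i z (mem_ball_self hr)]

theorem exists_tendstoLocallyUniformlyOn_of_norm_le {ι : Type*} (l : Ultrafilter ι) {W : Set ℂ}
    (hW : IsOpen W) {G : ι → ℂ → ℂ} {M : ℝ}
    (hG : ∀ᶠ i in l, DifferentiableOn ℂ (G i) W ∧ ∀ w ∈ W, ‖G i w‖ ≤ M) :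
    ∃ g, TendstoLocallyUniformlyOn G g l W := by
  classical
  obtain ⟨i₀, hi₀⟩ := hG.exists
  -- `G'` agrees with `G` eventually and is holomorphic and bounded for every index, as
  -- Arzelà–Ascoli requires.
  set G' : ι → ℂ → ℂ := fun i =>
    if DifferentiableOn ℂ (G i) W ∧ ∀ w ∈ W, ‖G i w‖ ≤ M then G i else G i₀
  have hG' : ∀ i, DifferentiableOn ℂ (G' i) W ∧ ∀ w ∈ W, ‖G' i w‖ ≤ M := fun i => by
    dsimp only [G']; split_ifs with h; exacts [h, hi₀]
  have hlim : ∀ w ∈ W, ∃ z, Tendsto (fun i => G' i w) l (𝓝 z) := fun w hw => by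
    obtain ⟨z, -, hz⟩ := (isCompact_closedBall (0 : ℂ) M).ultrafilter_le_nhds (l.map _)
      (le_principal_iff.mpr (mem_map.mpr (univ_mem' fun i => by simpa using (hG' i).2 w hw)))
    exact ⟨z, hz⟩
  choose! g hg using hlim
  refine ⟨g, (tendstoLocallyUniformlyOn_iff_forall_isCompact hW).mpr fun K hKW hK => ?_⟩
  have : CompactSpace K := isCompact_iff_compactSpace.mp hK
  have heqc : Equicontinuous (K.domRestrict ∘ G') :=
    (equicontinuous_restrict_iff _).mpr fun k hk => by
      obtain ⟨r, hr, hrW⟩ := isOpen_iff.mp hW k (hKW hk)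
      exact (equicontinuousAt_of_norm_le hr (fun i => (hG' i).1.mono hrW)
        (fun i w hw => (hG' i).2 w (hrW hw))).equicontinuousWithinAt K
  have := (heqc.tendsto_uniformFun_iff_pi l (K.domRestrict g)).mpr
    (tendsto_pi_nhds.mpr fun k => hg k (hKW k.2))
  rw [UniformFun.tendsto_iff_tendstoUniformly] at this
  exact (tendstoUniformlyOn_iff_tendstoUniformly_comp_coe.mpr this).congr
    (hG.mono fun i h x _ => congrFun (if_pos h : G' i = G i) x)

theorem eventually_mem_image_of_tendstoUniformlyOn {ι : Type*} {l : Filter ι} {G : ι → ℂ → ℂ}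
    {g : ℂ → ℂ} {z : ℂ} {t : ℝ} (ht : 0 < t)
    (hG : ∀ᶠ i in l, DifferentiableOn ℂ (G i) (closedBall z t))
    (hconv : TendstoUniformlyOn G g l (closedBall z t)) (hg : ContinuousOn g (sphere z t))
    (hsph : ∀ w ∈ sphere z t, g w ≠ g z) :
    ∀ᶠ i in l, g z ∈ G i '' closedBall z t := by
  obtain ⟨w₀, hw₀, hmin⟩ := (isCompact_sphere z t).exists_isMinOn (f := fun w => ‖g w - g z‖)
    (NormedSpace.sphere_nonempty.mpr ht.le) (hg.sub continuousOn_const).norm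
  set μ := ‖g w₀ - g z‖
  have hμ : 0 < μ := norm_pos_iff.mpr (sub_ne_zero.mpr (hsph w₀ hw₀))
  filter_upwards [Metric.tendstoUniformlyOn_iff.mp hconv (μ / 2) (half_pos hμ), hG]
    with i hi hdi
  -- Otherwise `(G i - g z)⁻¹` is holomorphic on the ball and larger at the centre than on the
  -- sphere.
  by_contra hno
  have hne : ∀ w ∈ closedBall z t, G i w - g z ≠ 0 := fun w hw h =>
    hno ⟨w, hw, sub_eq_zero.mp h⟩
  have hF : DiffContOnCl ℂ (fun w => (G i w - g z)⁻¹) (ball z t) := by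
    refine DifferentiableOn.diffContOnCl ?_
    rw [closure_ball z ht.ne']
    exact (hdi.sub_const _).inv hne
  have hbound := Complex.norm_le_of_forall_mem_frontier_norm_le isBounded_ball hF
    (C := (μ / 2)⁻¹) (fun w hw => by
      rw [frontier_ball z ht.ne'] at hw
      have hμw : μ ≤ ‖g w - g z‖ := hmin hw
      have := hi w (sphere_subset_closedBall hw)
      rw [dist_eq_norm] at this
      rw [norm_inv]
      exact inv_anti₀ (half_pos hμ)
        (by linarith [norm_sub_le_norm_sub_add_norm_sub (g w) (G i w) (g z)]))
    (subset_closure (mem_ball_self ht))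
  have hz : ‖G i z - g z‖ < μ / 2 := by
    rw [← dist_eq_norm, dist_comm]; exact hi z (mem_closedBall_self ht.le)
  rw [norm_inv] at hbound
  exact (inv_strictAnti₀ (norm_pos_iff.mpr (hne z (mem_closedBall_self ht.le))) hz).not_ge
    hbound

theorem eventually_mem_image_of_tendstoLocallyUniformlyOn {ι : Type*} {l : Filter ι}
    {W : Set ℂ} (hW : IsOpen W) {G : ι → ℂ → ℂ} {g : ℂ → ℂ} {z : ℂ} (hz : z ∈ W)
    (hG : ∀ᶠ i in l, DifferentiableOn ℂ (G i) W) (hconv : TendstoLocallyUniformlyOn G g l W)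
    (hg : ContinuousOn g W) (hne : ∀ᶠ w in 𝓝[≠] z, g w ≠ g z) :
    ∀ᶠ i in l, g z ∈ G i '' W := by
  obtain ⟨ε, hε, hεne⟩ := Metric.eventually_nhds_iff.mp (eventually_nhdsWithin_iff.mp hne)
  obtain ⟨r, hr, hrW⟩ := isOpen_iff.mp hW z hz
  set t := min ε r / 2
  have ht : 0 < t := by positivity
  have htW : closedBall z t ⊆ W :=
    (closedBall_subset_ball (by simp only [t]; linarith [min_le_right ε r])).trans hrW
  have hsph : ∀ w ∈ sphere z t, g w ≠ g z := fun w hw => hεne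
    (by rw [mem_sphere.mp hw]; simp only [t]; linarith [min_le_left ε r])
    (by rintro rfl; simp at hw; linarith)
  filter_upwards [eventually_mem_image_of_tendstoUniformlyOn ht (hG.mono fun _ h => h.mono htW)
    ((tendstoLocallyUniformlyOn_iff_forall_isCompact hW).mp hconv _ htW
      (isCompact_closedBall z t)) (hg.mono (sphere_subset_closedBall.trans htW)) hsph]
    with i hi
  exact image_mono htW hi

theorem mem_interior_setOf_eventually_mem_image {ι : Type*} {l : Ultrafilter ι} {W : Set ℂ}
    (hWo : IsOpen W) (hWc : IsPreconnected W) {G : ι → ℂ → ℂ} {M : ℝ}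
    (hG : ∀ᶠ i in l, DifferentiableOn ℂ (G i) W ∧ ∀ w ∈ W, ‖G i w‖ ≤ M)
    {p q : ι → ℂ} {p₀ q₀ : ℂ} (hp₀ : p₀ ∈ W) (hq₀ : q₀ ∈ W) (hp : Tendsto p l (𝓝 p₀))
    (hq : Tendsto q l (𝓝 q₀)) {x y : ℂ} (hx : ∀ᶠ i in l, G i (p i) = x)
    (hy : ∀ᶠ i in l, G i (q i) = y) (hxy : x ≠ y) :
    x ∈ interior {z | ∀ᶠ i in l, z ∈ G i '' W} := by
  obtain ⟨g, hconv⟩ := exists_tendstoLocallyUniformlyOn_of_norm_le l hWo hG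
  have hGd : ∀ᶠ i in l, DifferentiableOn ℂ (G i) W := hG.mono fun _ h => h.1
  have hgd : DifferentiableOn ℂ g W := hconv.differentiableOn hGd hWo
  have hga : AnalyticOnNhd ℂ g W := hgd.analyticOnNhd hWo
  have hlim : ∀ {s : ι → ℂ} {s₀ v : ℂ}, s₀ ∈ W → Tendsto s l (𝓝 s₀) →
      (∀ᶠ i in l, G i (s i) = v) → g s₀ = v := fun hs₀ hs hv =>
    tendsto_nhds_unique (hconv.tendsto_comp (hgd.continuousOn.continuousWithinAt hs₀) hs₀
      (by rwa [hWo.nhdsWithin_eq hs₀])) (tendsto_const_nhds.congr' (hv.mono fun _ h => h.symm))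
  have hnconst : ¬ ∃ w, ∀ z ∈ W, g z = w := fun ⟨w, hw⟩ =>
    hxy (by rw [← hlim hp₀ hp hx, ← hlim hq₀ hq hy, hw _ hp₀, hw _ hq₀])
  have hisol : ∀ u ∈ W, ∀ᶠ w in 𝓝[≠] u, g w ≠ g u := fun u hu =>
    ((hga u hu).eventually_eq_or_eventually_ne analyticAt_const).resolve_left fun h =>
      hnconst ⟨g u, hga.eqOn_of_preconnected_of_eventuallyEq analyticOnNhd_const hWc hu h⟩
  refine interior_maximal ?_
    (((hga.is_constant_or_isOpen hWc).resolve_left hnconst) W subset_rfl hWo)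
    ⟨p₀, hp₀, hlim hp₀ hp hx⟩
  rintro _ ⟨u, hu, rfl⟩
  exact eventually_mem_image_of_tendstoLocallyUniformlyOn hWo hu hGd hconv hgd.continuousOn
    (hisol u hu)

end NormalFamilies

theorem isTotallyDisconnected_of_forall_mem_interior {X : Type*} [TopologicalSpace X]
    [PreconnectedSpace X] [LocallyConnectedSpace X] {K : Set X} (hK : IsClosed K)
    (hKu : K ≠ univ)
    (h : ∀ T ⊆ K, IsPreconnected T → ∀ x ∈ T, ∀ y ∈ T, x ≠ y → x ∈ interior K) :
    IsTotallyDisconnected K := by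
  intro T hTK hT a ha b hb
  by_contra hab
  have haK := h T hTK hT a ha b hb hab
  set Ω := connectedComponentIn (interior K) a
  have hΩo : IsOpen Ω := isOpen_interior.connectedComponentIn
  have haΩ : a ∈ Ω := mem_connectedComponentIn haK
  have hΩK : Ω ⊆ K := (connectedComponentIn_subset _ _).trans interior_subset
  obtain ⟨z, hzΩ, hz⟩ : ∃ z ∈ closure Ω, z ∉ Ω := by
    by_contra! hcl
    rcases isClopen_iff.mp ⟨closure_subset_iff_isClosed.mp hcl, hΩo⟩ with hΩ | hΩ
    · exact notMem_empty a (hΩ ▸ haΩ)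
    · exact hKu (eq_univ_of_univ_subset (hΩ ▸ hΩK))
  have hzK : z ∈ interior K := h (closure Ω) (closure_minimal hΩK hK)
    isPreconnected_connectedComponentIn.closure z hzΩ a (subset_closure haΩ)
    (fun hza => hz (hza ▸ haΩ))
  obtain ⟨w, hwz, hwΩ⟩ := mem_closure_iff.mp hzΩ _ isOpen_interior.connectedComponentIn
    (mem_connectedComponentIn hzK)
  have hΩz : Ω = connectedComponentIn (interior K) z :=
    (connectedComponentIn_eq hwΩ).trans (connectedComponentIn_eq hwz).symm
  exact hz (hΩz ▸ mem_connectedComponentIn hzK)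

section Dynamics

variable (c : ℂ)

def P : ℂ → ℂ := fun w => w ^ 2 + c

noncomputable def escapeRadius : ℝ := ‖c‖ + 2

def filledJulia : Set ℂ := {z | IsBounded (range fun n : ℕ => (P c)^[n] z)}

def sublevel (n : ℕ) : Set ℂ := {z | ‖(P c)^[n] z‖ < escapeRadius c}

variable {c}

theorem differentiable_iterate_P (n : ℕ) : Differentiable ℂ (P c)^[n] :=
  Differentiable.iterate (by unfold P; fun_prop) n

theorem continuous_P : Continuous (P c) := by
  unfold P; fun_prop

theorem continuous_iterate_P (n : ℕ) : Continuous (P c)^[n] :=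
  (differentiable_iterate_P n).continuous

theorem mem_filledJulia {z : ℂ} :
    z ∈ filledJulia c ↔ IsBounded (range fun n : ℕ => (P c)^[n] z) := Iff.rfl

theorem norm_add_one_le_norm_P {z : ℂ} (hz : escapeRadius c ≤ ‖z‖) : ‖z‖ + 1 ≤ ‖P c z‖ := by
  have : ‖z‖ ^ 2 ≤ ‖P c z‖ + ‖c‖ := by
    simpa [P, norm_pow] using norm_sub_le (P c z) c
  rw [escapeRadius] at hz
  nlinarith [norm_nonneg c]

theorem escapeRadius_add_le_norm_iterate {z : ℂ} (hz : escapeRadius c ≤ ‖z‖) (n : ℕ) :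
    escapeRadius c + n ≤ ‖(P c)^[n] z‖ := by
  induction n with
  | zero => simpa using hz
  | succ n ih =>
    rw [Function.iterate_succ_apply', Nat.cast_succ]
    have := norm_add_one_le_norm_P (le_trans (le_add_of_nonneg_right n.cast_nonneg) ih)
    linarith

theorem mem_filledJulia_iff {z : ℂ} : z ∈ filledJulia c ↔ ∀ n, z ∈ sublevel c n := by
  rw [mem_filledJulia]
  refine ⟨fun hz n => ?_, fun hz => isBounded_iff_forall_norm_le.mpr
    ⟨escapeRadius c, forall_mem_range.mpr fun n => (hz n).le⟩⟩
  obtain ⟨C, hC⟩ := isBounded_iff_forall_norm_le.mp hz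
  by_contra hn
  obtain ⟨k, hk⟩ := exists_nat_gt (C - escapeRadius c)
  have := hC _ ⟨k + n, rfl⟩
  simp only [Function.iterate_add_apply] at this
  linarith [escapeRadius_add_le_norm_iterate (not_lt.mp hn) k]

theorem sublevel_antitone : Antitone (sublevel c) := by
  refine antitone_nat_of_succ_le fun n z hz => ?_
  by_contra hn
  have hle : escapeRadius c ≤ ‖(P c)^[n] z‖ := not_lt.mp hn
  have := norm_add_one_le_norm_P hle
  rw [sublevel, mem_ofPred, Function.iterate_succ_apply'] at hz
  linarith

theorem mem_sublevel_succ_iff {z : ℂ} {n : ℕ} : z ∈ sublevel c (n + 1) ↔ P c z ∈ sublevel c n := by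
  simp [sublevel, Function.iterate_succ_apply]

theorem isOpen_sublevel (n : ℕ) : IsOpen (sublevel c n) :=
  isOpen_lt (continuous_iterate_P n).norm continuous_const

theorem sublevel_subset_ball (n : ℕ) : sublevel c n ⊆ ball 0 (escapeRadius c) := fun z hz => by
  simpa [sublevel] using sublevel_antitone (Nat.zero_le n) hz

theorem filledJulia_subset_sublevel (n : ℕ) : filledJulia c ⊆ sublevel c n :=
  fun _ hz => mem_filledJulia_iff.mp hz n

theorem mem_filledJulia_of_frequently {z : ℂ} (hz : ∃ᶠ n in atTop, z ∈ sublevel c n) :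
    z ∈ filledJulia c :=
  mem_filledJulia_iff.mpr fun n =>
    let ⟨_, hk, hzk⟩ := (frequently_atTop.mp hz) n
    sublevel_antitone hk hzk

theorem iterate_mem_filledJulia {z : ℂ} (hz : z ∈ filledJulia c) (n : ℕ) :
    (P c)^[n] z ∈ filledJulia c :=
  mem_filledJulia_iff.mpr fun k => by
    simpa [sublevel, ← Function.iterate_add_apply] using mem_filledJulia_iff.mp hz (k + n)

theorem isCompact_filledJulia : IsCompact (filledJulia c) := by
  have : filledJulia c = ⋂ n, {z | ‖(P c)^[n] z‖ ≤ escapeRadius c} := by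
    ext z
    simp only [mem_iInter, mem_ofPred_eq]
    refine ⟨fun hz n => (mem_filledJulia_iff.mp hz n).le, fun hz => ?_⟩
    exact isBounded_iff_forall_norm_le.mpr ⟨_, forall_mem_range.mpr hz⟩
  refine isCompact_of_isClosed_isBounded ?_
    (isBounded_ball.subset ((filledJulia_subset_sublevel 0).trans (sublevel_subset_ball 0)))
  rw [this]
  exact isClosed_iInter fun n => isClosed_le (continuous_iterate_P n).norm continuous_const

theorem exists_escapeRadius_lt_norm_iterate (h : 0 ∉ filledJulia c) :
    ∃ m, ∀ j ≥ m, escapeRadius c < ‖(P c)^[j] c‖ := by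
  obtain ⟨m, hm⟩ := not_forall.mp (mt mem_filledJulia_iff.mpr h)
  refine ⟨m, fun j hj => ?_⟩
  have hc : (P c)^[j] c = (P c)^[j + 1 - m] ((P c)^[m] 0) := by
    rw [← Function.iterate_add_apply, Nat.sub_add_cancel (by omega), Function.iterate_succ_apply]
    simp [P]
  have hpos : (0 : ℝ) < (j + 1 - m : ℕ) := Nat.cast_pos.mpr (by omega)
  rw [hc]
  linarith [escapeRadius_add_le_norm_iterate (not_lt.mp hm) (j + 1 - m)]

variable (c) in
def sublevelComponent (n : ℕ) (z : ℂ) : Set ℂ := connectedComponentIn (sublevel c n) z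

theorem isOpen_sublevelComponent (n : ℕ) (z : ℂ) : IsOpen (sublevelComponent c n z) :=
  (isOpen_sublevel n).connectedComponentIn

theorem isPreconnected_sublevelComponent (n : ℕ) (z : ℂ) :
    IsPreconnected (sublevelComponent c n z) :=
  isPreconnected_connectedComponentIn

theorem sublevelComponent_subset (n : ℕ) (z : ℂ) : sublevelComponent c n z ⊆ sublevel c n :=
  connectedComponentIn_subset _ _

theorem mem_sublevelComponent {n : ℕ} {z : ℂ} (hz : z ∈ sublevel c n) :
    z ∈ sublevelComponent c n z :=
  mem_connectedComponentIn hz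

theorem sublevelComponent_eq {n : ℕ} {z w : ℂ} (h : w ∈ sublevelComponent c n z) :
    sublevelComponent c n z = sublevelComponent c n w :=
  connectedComponentIn_eq h

theorem mapsTo_P_sublevelComponent {j : ℕ} {x : ℂ} (hx : x ∈ sublevel c (j + 1)) :
    MapsTo (P c) (sublevelComponent c (j + 1) x) (sublevelComponent c j (P c x)) :=
  fun y hy => ((isPreconnected_sublevelComponent _ _).image _
    continuous_P.continuousOn).subset_connectedComponentIn ⟨x, mem_sublevelComponent hx, rfl⟩
      (by rintro _ ⟨v, hv, rfl⟩; exact mem_sublevel_succ_iff.mp (sublevelComponent_subset _ _ hv))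
      ⟨y, hy, rfl⟩

theorem zero_notMem_sublevel_succ {j : ℕ} (hj : escapeRadius c < ‖(P c)^[j] c‖) :
    (0 : ℂ) ∉ sublevel c (j + 1) := by
  rw [mem_sublevel_succ_iff]
  simpa [sublevel, P] using hj.le

theorem exists_inverse_branch {j : ℕ} (hj : escapeRadius c < ‖(P c)^[j] c‖) {x : ℂ}
    (hx : x ∈ sublevel c (j + 1)) :
    ∃ h : ℂ → ℂ, DifferentiableOn ℂ h (sublevelComponent c j (P c x)) ∧
      MapsTo h (sublevelComponent c j (P c x)) (sublevelComponent c (j + 1) x) ∧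
      ∀ y ∈ sublevelComponent c (j + 1) x, h (P c y) = y := by
  set Y := sublevelComponent c j (P c x)
  set X := sublevelComponent c (j + 1) x
  have hPx : P c x ∈ sublevel c j := mem_sublevel_succ_iff.mp hx
  obtain ⟨L, hLc, hL⟩ := exists_continuousOn_exp_eq_sub (isOpen_sublevelComponent j _)
    (isPreconnected_sublevelComponent j _) (differentiable_iterate_P j)
    (fun w hw => (sublevelComponent_subset j _ hw).le) hj
  obtain ⟨h, hd, hhx, hsq⟩ := exists_differentiableOn_sq_eq_sub (isOpen_sublevelComponent j _)
    hLc hL (mem_sublevelComponent hPx) (x₀ := x) (by simp [P])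
  have hPh : ∀ u ∈ Y, P c (h u) = u := fun u hu => by simp [P, hsq u hu]
  have hmaps : MapsTo h Y X := fun u hu =>
    ((isPreconnected_sublevelComponent j _).image h hd.continuousOn).subset_connectedComponentIn
      ⟨P c x, mem_sublevelComponent hPx, hhx⟩
      (by rintro _ ⟨v, hv, rfl⟩
          exact mem_sublevel_succ_iff.mpr ((hPh v hv).symm ▸ sublevelComponent_subset j _ hv))
      ⟨u, hu, rfl⟩
  refine ⟨h, hd, hmaps, fun y hy => ?_⟩
  have h0 : ∀ {y}, y ∈ X → id y ≠ 0 := fun hy h0 =>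
    zero_notMem_sublevel_succ hj (h0 ▸ sublevelComponent_subset _ _ hy)
  refine (isPreconnected_sublevelComponent _ _).eq_of_sq_eq (f := h ∘ P c) (g := id)
    (hd.continuousOn.comp continuous_P.continuousOn (mapsTo_P_sublevelComponent hx))
    continuousOn_id (fun y hy => ?_) h0 (mem_sublevelComponent hx) (by simp [hhx]) hy
  simpa [P] using hsq _ (mapsTo_P_sublevelComponent hx hy)

theorem exists_inverse_branch_iterate {m : ℕ} (hm : ∀ j ≥ m, escapeRadius c < ‖(P c)^[j] c‖)
    (n : ℕ) {x : ℂ} (hx : x ∈ sublevel c (m + n)) :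
    ∃ G : ℂ → ℂ, DifferentiableOn ℂ G (sublevelComponent c m ((P c)^[n] x)) ∧
      MapsTo G (sublevelComponent c m ((P c)^[n] x)) (sublevelComponent c (m + n) x) ∧
      ∀ y ∈ sublevelComponent c (m + n) x, G ((P c)^[n] y) = y := by
  induction n generalizing x with
  | zero => exact ⟨id, differentiableOn_id, mapsTo_id _, fun _ _ => rfl⟩
  | succ n ih =>
    obtain ⟨h, hd, hmaps, hinv⟩ := exists_inverse_branch (hm (m + n) (by omega)) hx
    obtain ⟨G, hGd, hGmaps, hGinv⟩ := ih (mem_sublevel_succ_iff.mp hx)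
    refine ⟨h ∘ G, hd.comp hGd hGmaps, hmaps.comp hGmaps, fun y hy => ?_⟩
    change h (G ((P c)^[n] (P c y))) = y
    rw [hGinv _ (mapsTo_P_sublevelComponent hx hy), hinv y hy]

theorem exists_tendsto_iterate (l : Ultrafilter ℕ) {z : ℂ} (hz : z ∈ filledJulia c) :
    ∃ z₀ ∈ filledJulia c, Tendsto (fun n => (P c)^[n] z) l (𝓝 z₀) :=
  isCompact_filledJulia.ultrafilter_le_nhds (l.map _)
    (le_principal_iff.mpr (mem_map.mpr (univ_mem' fun n => iterate_mem_filledJulia hz n)))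

theorem eventually_sublevelComponent_eq {ι : Type*} {l : Filter ι} {m : ℕ} {s : ι → ℂ} {z₀ : ℂ}
    (hz₀ : z₀ ∈ sublevel c m) (hs : Tendsto s l (𝓝 z₀)) :
    ∀ᶠ i in l, sublevelComponent c m (s i) = sublevelComponent c m z₀ :=
  (hs.eventually_mem ((isOpen_sublevelComponent m _).mem_nhds (mem_sublevelComponent hz₀))).mono
    fun _ hi => (sublevelComponent_eq hi).symm

theorem image_iterate_subset_sublevelComponent {T : Set ℂ} (hT : IsPreconnected T)
    (hTK : T ⊆ filledJulia c) {x : ℂ} (hx : x ∈ T) (n k : ℕ) :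
    (P c)^[k] '' T ⊆ sublevelComponent c n ((P c)^[k] x) :=
  (hT.image _ (continuous_iterate_P k).continuousOn).subset_connectedComponentIn ⟨x, hx, rfl⟩
    (by
      rintro _ ⟨z, hz, rfl⟩
      exact filledJulia_subset_sublevel n (iterate_mem_filledJulia (hTK hz) k))

theorem setOf_eventually_mem_image_subset_filledJulia {l : Ultrafilter ℕ}
    (hl : (l : Filter ℕ) ≤ atTop) {m : ℕ} {W : Set ℂ} {G : ℕ → ℂ → ℂ}
    (hG : ∀ᶠ n in l, MapsTo (G n) W (sublevel c (m + n))) :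
    {z | ∀ᶠ n in l, z ∈ G n '' W} ⊆ filledJulia c := fun _ hz =>
  mem_filledJulia_of_frequently <| ((Eventually.and hz hG).frequently.filter_mono hl).mono
    fun n ⟨⟨_, hw, hwz⟩, hmaps⟩ => sublevel_antitone (Nat.le_add_left n m) (hwz ▸ hmaps hw)

theorem mem_interior_filledJulia {m : ℕ} (hm : ∀ j ≥ m, escapeRadius c < ‖(P c)^[j] c‖)
    {T : Set ℂ} (hT : IsPreconnected T) (hTK : T ⊆ filledJulia c) {x y : ℂ} (hx : x ∈ T)
    (hy : y ∈ T) (hxy : x ≠ y) : x ∈ interior (filledJulia c) := by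
  let l : Ultrafilter ℕ := hyperfilter ℕ
  obtain ⟨p₀, hp₀K, hp⟩ := exists_tendsto_iterate l (hTK hx)
  obtain ⟨q₀, hq₀K, hq⟩ := exists_tendsto_iterate l (hTK hy)
  set W := sublevelComponent c m p₀
  have hW : ∀ᶠ n in l, sublevelComponent c m ((P c)^[n] x) = W :=
    eventually_sublevelComponent_eq (filledJulia_subset_sublevel m hp₀K) hp
  have hq₀W : q₀ ∈ W := by
    obtain ⟨n, hnx, hny⟩ := (hW.and (eventually_sublevelComponent_eq
      (filledJulia_subset_sublevel m hq₀K) hq)).exists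
    rw [← hnx, sublevelComponent_eq (image_iterate_subset_sublevelComponent hT hTK hx m n
      ⟨y, hy, rfl⟩), hny]
    exact mem_sublevelComponent (filledJulia_subset_sublevel m hq₀K)
  choose G hGd hGmaps hGinv using fun n =>
    exists_inverse_branch_iterate hm n (filledJulia_subset_sublevel (m + n) (hTK hx))
  have hGW : ∀ᶠ n in l, DifferentiableOn ℂ (G n) W ∧ MapsTo (G n) W (sublevel c (m + n)) :=
    hW.mono fun n hn => hn ▸ ⟨hGd n, (hGmaps n).mono_right (sublevelComponent_subset _ _)⟩
  have hGR : ∀ᶠ n in l, DifferentiableOn ℂ (G n) W ∧ ∀ w ∈ W, ‖G n w‖ ≤ escapeRadius c :=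
    hGW.mono fun n hn => ⟨hn.1, fun w hw => (mem_ball_zero_iff.mp
      (sublevel_subset_ball _ (hn.2 hw))).le⟩
  have hGx : ∀ n, G n ((P c)^[n] x) = x := fun n =>
    hGinv n x (mem_sublevelComponent (filledJulia_subset_sublevel _ (hTK hx)))
  have hGy : ∀ n, G n ((P c)^[n] y) = y := fun n =>
    hGinv n y (image_iterate_subset_sublevelComponent hT hTK hx (m + n) 0 ⟨y, hy, rfl⟩)
  exact interior_mono
    (setOf_eventually_mem_image_subset_filledJulia Nat.hyperfilter_le_atTop
      (hGW.mono fun _ h => h.2))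
    (mem_interior_setOf_eventually_mem_image (isOpen_sublevelComponent m p₀)
      (isPreconnected_sublevelComponent m p₀) hGR
      (mem_sublevelComponent (filledJulia_subset_sublevel m hp₀K)) hq₀W hp hq
      (.of_forall hGx) (.of_forall hGy) hxy)

theorem isTotallyDisconnected_filledJulia (h : 0 ∉ filledJulia c) :
    IsTotallyDisconnected (filledJulia c) := by
  obtain ⟨m, hm⟩ := exists_escapeRadius_lt_norm_iterate h
  exact isTotallyDisconnected_of_forall_mem_interior isCompact_filledJulia.isClosed
    (fun hK => h (hK ▸ mem_univ 0)) fun T hTK hT x hx y hy hxy =>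
      mem_interior_filledJulia hm hT hTK hx hy hxy

end Dynamics

end QuadraticJulia

theorem stmt_18 (c : ℂ)
    (h : ¬ Bornology.IsBounded
      (Set.range fun n : ℕ => (fun w : ℂ => w ^ 2 + c)^[n] 0)) :
    IsTotallyDisconnected {z : ℂ | Bornology.IsBounded
      (Set.range fun n : ℕ => (fun w : ℂ => w ^ 2 + c)^[n] z)} :=
  QuadraticJulia.isTotallyDisconnected_filledJulia h
end
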